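/- Let Q₁,...,Qₙ be quandles and G = (g_{i,j}) a matrix of group homomorphisms g_{i,j} : Γ_{Q_i} → Aut(Q_j), with g_{i,i} the canonical homomorphism. Then the semidisjoint union #(Q₁,...,Qₙ,G) is a quandle if and only if for all distinct i,j,k: (1) (x·g_{j,i}(|y|)) ▷ᵢ z = (x ▷ᵢ z)·g_{j,i}(|y·g_{i,j}(|z|)|) for x,z ∈ Q_i, y ∈ Q_j, and (2) (x·g_{j,i}(|y|))·g_{k,i}(|z|) = (x·g_{k,i}(|z|))·g_{j,i}(|y·g_{k,j}(|z|)|) for x ∈ Q_i, y ∈ Q_j, z ∈ Q_k. -/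

import Mathlib

universe u

/-- A quandle with a *right* self-distributive operation `x ▷ y`, following
Ehrman–Gurpinar–Thibault–Yetter. -/
class RQuandle (Q : Type u) where
  act : Q → Q → Q
  act_self : ∀ x : Q, act x x = x
  act_rinv : ∀ a b : Q, ∃! y, act y a = b
  act_distrib : ∀ a b c : Q, act (act a b) c = act (act a c) (act b c)

infixl:65 " ▷ " => RQuandle.act

namespace RQuandle

variable {Q : Type u} [RQuandle Q]

/-- The inner automorphism `S_y : x ↦ x ▷ y`, as a permutation of `Q`. -/
noncomputable def SPerm (y : Q) : Equiv.Perm Q :=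
  Equiv.ofBijective (fun x => x ▷ y)
    ⟨fun a b h => by
        obtain ⟨c, _, hu⟩ := RQuandle.act_rinv y (b ▷ y)
        exact (hu a h).trans (hu b rfl).symm,
      fun b => (RQuandle.act_rinv y b).exists⟩

@[simp] lemma SPerm_apply (x y : Q) : SPerm y x = x ▷ y := rfl

/-- The inner automorphism group of a quandle: the subgroup of `Equiv.Perm Q`
generated by the maps `S_y`. -/
def Inn (Q : Type u) [RQuandle Q] : Subgroup (Equiv.Perm Q) :=
  Subgroup.closure (Set.range (SPerm : Q → Equiv.Perm Q))

lemma SPerm_mem_Inn (y : Q) : SPerm y ∈ Inn Q :=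
  Subgroup.subset_closure ⟨y, rfl⟩

/-- A quandle is (algebraically) connected when `Inn Q` acts transitively. -/
def Connected (Q : Type u) [RQuandle Q] : Prop :=
  ∀ x y : Q, ∃ p ∈ Inn Q, p x = y

/-- The orbit of `s` under the inner automorphism group. -/
def orbitSet (s : Q) : Set Q := {t | ∃ p ∈ Inn Q, p s = t}

/-- `f` is an automorphism of the quandle `Q`. -/
def IsQAut (f : Equiv.Perm Q) : Prop := ∀ x y : Q, f (x ▷ y) = f x ▷ f y

/-- Key conjugation identity: in left-to-right (right action) convention this is
`S_{x ▷ y} = S_y⁻¹ S_x S_y`. -/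
lemma SPerm_conj (x y : Q) : SPerm (x ▷ y) = SPerm y * SPerm x * (SPerm y)⁻¹ := by
  rw [eq_mul_inv_iff_mul_eq]
  ext u
  simp only [Equiv.Perm.mul_apply, SPerm_apply]
  exact (RQuandle.act_distrib u x y).symm

/-- Relators for the universal augmentation group `Γ_Q`: `|x ▷ y| = |y|⁻¹ |x| |y|`. -/
def augRels (Q : Type u) [RQuandle Q] : Set (FreeGroup Q) :=
  {w | ∃ x y : Q,
    w = FreeGroup.of (x ▷ y) * ((FreeGroup.of y)⁻¹ * FreeGroup.of x * FreeGroup.of y)⁻¹}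

/-- The universal augmentation group `Γ_Q` of a quandle. -/
abbrev Gamma (Q : Type u) [RQuandle Q] := PresentedGroup (augRels Q)

/-- The generator `|x| ∈ Γ_Q`. -/
def gen (x : Q) : Gamma Q := PresentedGroup.of x

/-- The canonical homomorphism `Γ_Q → Aut(Q)` sending `|y|` to `S_y`.  Since the
paper composes automorphisms as right actions, this is a homomorphism into the
opposite of the permutation group. -/
noncomputable def canHom (Q : Type u) [RQuandle Q] : Gamma Q →* (Equiv.Perm Q)ᵐᵒᵖ :=
  PresentedGroup.toGroup (f := fun y => MulOpposite.op (SPerm y)) (by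
    rintro w ⟨x, y, rfl⟩
    simp only [map_mul, map_inv, FreeGroup.lift_apply_of]
    rw [← MulOpposite.op_inv, ← MulOpposite.op_mul, ← MulOpposite.op_mul, SPerm_conj]
    simp [mul_assoc])

@[simp] lemma canHom_gen (y : Q) : canHom Q (gen y) = MulOpposite.op (SPerm y) :=
  PresentedGroup.toGroup.of _

lemma orbit_act_mem {s x : Q} (y : Q) (hx : x ∈ orbitSet s) : x ▷ y ∈ orbitSet s := by
  obtain ⟨p, hp, rfl⟩ := hx
  exact ⟨SPerm y * p, mul_mem (SPerm_mem_Inn y) hp, rfl⟩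

lemma orbit_actinv_mem {s x : Q} (y : Q) (hx : x ∈ orbitSet s) :
    (SPerm y).symm x ∈ orbitSet s := by
  obtain ⟨p, hp, rfl⟩ := hx
  exact ⟨(SPerm y)⁻¹ * p, mul_mem (inv_mem (SPerm_mem_Inn y)) hp, rfl⟩

lemma orbit_mem_iff (t : Q) (y : Q) {u : Q} :
    u ∈ orbitSet t ↔ u ▷ y ∈ orbitSet t := by
  constructor
  · exact fun h => orbit_act_mem y h
  · intro h
    have := orbit_actinv_mem y h
    rw [← SPerm_apply u y, Equiv.symm_apply_apply] at this
    exact this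

/-- Each orbit of `Inn Q` is a subquandle. -/
instance orbitQuandle (s : Q) : RQuandle (orbitSet s) where
  act a b := ⟨a.1 ▷ b.1, orbit_act_mem b.1 a.2⟩
  act_self a := Subtype.ext (RQuandle.act_self a.1)
  act_rinv a b := by
    refine ⟨⟨(SPerm a.1).symm b.1, orbit_actinv_mem a.1 b.2⟩, Subtype.ext ?_, ?_⟩
    · exact (SPerm a.1).apply_symm_apply b.1
    · rintro ⟨z, hz⟩ h
      apply Subtype.ext
      have hz' : z ▷ a.1 = b.1 := congrArg Subtype.val h
      show z = (SPerm a.1).symm b.1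
      rw [← hz']
      exact ((SPerm a.1).symm_apply_apply z).symm
  act_distrib a b c := Subtype.ext (RQuandle.act_distrib a.1 b.1 c.1)

/-- Restriction of `S_x` to the orbit of `t`. -/
noncomputable def phi (t : Q) (x : Q) : Equiv.Perm (orbitSet t) :=
  (SPerm x).subtypePerm (fun u => (orbit_mem_iff t x (u := u)).symm)

/-- The quandle axioms, as a predicate on a binary operation. -/
def IsRQuandleOp {A : Type u} (op : A → A → A) : Prop :=
  (∀ x, op x x = x) ∧ (∀ a b, ∃! y, op y a = b) ∧
    ∀ a b c, op (op a b) c = op (op a c) (op b c)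

end RQuandle


open RQuandle in
/-- The semidisjoint union operation on `∐ Qᵢ`:
`x ▷ y = x · g_{i,j}(|y|)` for `x ∈ Q_j`, `y ∈ Q_i`. -/
noncomputable def sdOp {ι : Type u} (Q : ι → Type u) [∀ i, RQuandle (Q i)]
    (g : ∀ i j, RQuandle.Gamma (Q i) →* (Equiv.Perm (Q j))ᵐᵒᵖ) :
    (Σ i, Q i) → (Σ i, Q i) → Σ i, Q i
  | ⟨j, x⟩, ⟨i, y⟩ => ⟨j, ((g i j (RQuandle.gen y)).unop) x⟩

/-! Read componentwise, the distributive law of the semidisjoint union at indices `(i, j, k)` says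
that `g_{k,i}(|z|) ∘ g_{j,i}(|y|) = g_{j,i}(|y · g_{k,j}(|z|)|) ∘ g_{k,i}(|z|)` on `Q_i`. For `j = k`
this is the defining relation of `Γ_{Q_j}`, for `j = i ≠ k` it says that `g_{k,i}(|z|)` is an
automorphism, and the remaining cases are conditions (1) and (2). Idempotence and right
invertibility hold automatically because `g_{i,i}` is canonical and every `g_{i,j}(|y|)` is a
permutation. -/

namespace RQuandle

variable {Q : Type u} [RQuandle Q]

lemma gen_act (x y : Q) : gen (x ▷ y) = (gen y)⁻¹ * gen x * gen y := by
  have hrel : (gen (x ▷ y) : Gamma Q) * ((gen y)⁻¹ * gen x * gen y)⁻¹ = 1 :=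
    (QuotientGroup.eq_one_iff _).2 (Subgroup.subset_normalClosure ⟨x, y, rfl⟩)
  exact mul_inv_eq_one.mp hrel

lemma canHom_gen_apply (x y : Q) : (canHom Q (gen y)).unop x = x ▷ y := by
  rw [canHom_gen, MulOpposite.unop_op, SPerm_apply]

lemma unop_gen_act_apply {R : Type*} (φ : Gamma Q →* (Equiv.Perm R)ᵐᵒᵖ) (y z : Q) (r : R) :
    (φ (gen (y ▷ z))).unop ((φ (gen z)).unop r) = (φ (gen z)).unop ((φ (gen y)).unop r) := by
  rw [gen_act, map_mul, map_mul, map_inv]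
  simp [Equiv.Perm.mul_apply]

end RQuandle

section SemidisjointUnion

open RQuandle

variable {ι : Type u} {Q : ι → Type u} [∀ i, RQuandle (Q i)]
  {g : ∀ i j, Gamma (Q i) →* (Equiv.Perm (Q j))ᵐᵒᵖ}

lemma sdOp_self (hdiag : ∀ i, g i i = canHom (Q i)) (x : Σ i, Q i) : sdOp Q g x x = x := by
  obtain ⟨i, x⟩ := x
  simp only [sdOp, hdiag i, canHom_gen_apply, RQuandle.act_self]

lemma sdOp_existsUnique_left (a b : Σ i, Q i) : ∃! y, sdOp Q g y a = b := by
  obtain ⟨i, a⟩ := a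
  obtain ⟨j, b⟩ := b
  refine ⟨⟨j, (g i j (gen a)).unop.symm b⟩, by simp [sdOp], ?_⟩
  rintro ⟨l, y⟩ h
  obtain ⟨rfl, hy⟩ := Sigma.mk.inj_iff.mp h
  rw [← eq_of_heq hy, Equiv.symm_apply_apply]

lemma sdOp_distrib_iff :
    (∀ a b c : Σ i, Q i, sdOp Q g (sdOp Q g a b) c = sdOp Q g (sdOp Q g a c) (sdOp Q g b c)) ↔
      ∀ i j k (x : Q i) (y : Q j) (z : Q k),
        (g k i (gen z)).unop ((g j i (gen y)).unop x) =
          (g j i (gen ((g k j (gen z)).unop y))).unop ((g k i (gen z)).unop x) := by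
  constructor
  · intro h i j k x y z
    exact eq_of_heq (Sigma.mk.inj_iff.mp (h ⟨i, x⟩ ⟨j, y⟩ ⟨k, z⟩)).2
  · rintro h ⟨i, x⟩ ⟨j, y⟩ ⟨k, z⟩
    exact Sigma.mk.inj_iff.mpr ⟨rfl, heq_of_eq (h i j k x y z)⟩

end SemidisjointUnion

open RQuandle in
/-- with `g_{i,j} : Γ_{Q_i} → Aut(Q_j)` and `g_{i,i}` canonical, the
semidisjoint union `#(Q₁,…,Qₙ,G)` is a quandle iff conditions (1) and (2) of the
paper hold for all distinct indices. -/
theorem semidisjoint_is_quandle_iff {ι : Type u} (Q : ι → Type u) [∀ i, RQuandle (Q i)]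
    (g : ∀ i j, Gamma (Q i) →* (Equiv.Perm (Q j))ᵐᵒᵖ)
    (haut : ∀ i j (w : Gamma (Q i)), IsQAut ((g i j w).unop))
    (hdiag : ∀ i, g i i = canHom (Q i)) :
    IsRQuandleOp (sdOp Q g) ↔
      ((∀ i j, i ≠ j → ∀ (x z : Q i) (y : Q j),
          ((g j i (gen y)).unop x) ▷ z =
            (g j i (gen (((g i j (gen z)).unop) y))).unop (x ▷ z)) ∧
       (∀ i j k, i ≠ j → j ≠ k → i ≠ k → ∀ (x : Q i) (y : Q j) (z : Q k),
          (g k i (gen z)).unop ((g j i (gen y)).unop x) =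
            (g j i (gen ((g k j (gen z)).unop y))).unop
              ((g k i (gen z)).unop x))) := by
  refine ⟨fun ⟨_, _, hdist⟩ => ?_, fun ⟨h1, h2⟩ => ?_⟩
  · have hcomp := sdOp_distrib_iff.1 hdist
    refine ⟨fun i j _ x z y => ?_, fun i j k _ _ _ => hcomp i j k⟩
    simpa only [hdiag i, canHom_gen_apply] using hcomp i j i x y z
  · refine ⟨sdOp_self hdiag, sdOp_existsUnique_left, sdOp_distrib_iff.2 ?_⟩
    intro i j k x y z
    by_cases hjk : j = k
    · subst hjk
      simpa only [hdiag j, canHom_gen_apply] using (unop_gen_act_apply (g j i) y z x).symm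
    by_cases hji : j = i
    · subst hji
      simpa only [hdiag j, canHom_gen_apply] using haut k j (gen z) x y
    by_cases hki : k = i
    · subst hki
      simpa only [hdiag k, canHom_gen_apply] using h1 k j (Ne.symm hji) x z y
    exact h2 i j k (Ne.symm hji) hjk (Ne.symm hki) x y z
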